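/- Let q ∈ ℕ, d ∈ {1,2,4}, and for a partition λ ∈ ℕ^q (λ₁ ≥ ⋯ ≥ λ_q ≥ 0) define (μ)_λ = ∏_{j=1}^q (μ - (d/2)(j-1))_{λ_j}. Then for all μ > d(q - 1/2), one has |1 - μ^{|λ|}/(μ)_λ| ≤ dq · 2^{dq(q-1)/2} · |λ|²/μ. -/

import Mathlib

/-!
Write `a_j = μ - (d/2) j`. Then `μ^|λ| / (μ)_λ` is the product of the factors `μ / (a_j + k)`,
`k < λ_j`. Since `μ < 2 a_j` each factor is at most `2`, and since `μ ≤ a_j + d j` it is at most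
`1` once `k ≥ d j`; so every partial product is at most `2^(∑ d j) = 2^(dq(q-1)/2)`. Each factor
is within `2 |μ - a_j - k| / μ` of `1`, and writing `1 - f P = (1 - f) + f (1 - P)` propagates
these errors through the product. Finally `∑_j ∑_{k < λ_j} |d j / 2 - k| ≤ d q |λ|² / 2`.
-/

open Finset Polynomial

theorem abs_one_sub_prod_le {ι : Type*} (s : Finset ι) {f g e : ι → ℝ}
    (hf : ∀ i ∈ s, 0 ≤ f i) (hfg : ∀ i ∈ s, f i ≤ g i) (hg : ∀ i ∈ s, 1 ≤ g i)
    (he : ∀ i ∈ s, |1 - f i| ≤ g i * e i) :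
    |1 - ∏ i ∈ s, f i| ≤ (∏ i ∈ s, g i) * ∑ i ∈ s, e i := by
  induction s using Finset.cons_induction with
  | empty => simp
  | cons a s ha ih =>
    simp only [mem_cons, forall_eq_or_imp] at hf hfg hg he
    have hea : 0 ≤ e a := nonneg_of_mul_nonneg_right ((abs_nonneg _).trans he.1) (by linarith)
    have hG : 1 ≤ ∏ i ∈ s, g i := one_le_prod hg.2
    have IH := ih hf.2 hfg.2 hg.2 he.2
    rw [prod_cons, prod_cons, sum_cons]
    calc |1 - f a * ∏ i ∈ s, f i|
        = |(1 - f a) + f a * (1 - ∏ i ∈ s, f i)| := by ring_nf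
      _ ≤ |1 - f a| + f a * |1 - ∏ i ∈ s, f i| :=
        (abs_add_le _ _).trans_eq (by rw [abs_mul, abs_of_nonneg hf.1])
      _ ≤ g a * e a * (∏ i ∈ s, g i) + g a * ((∏ i ∈ s, g i) * ∑ i ∈ s, e i) := by
        gcongr ?_ + ?_
        · exact he.1.trans (le_mul_of_one_le_right (mul_nonneg (by linarith) hea) hG)
        · exact mul_le_mul hfg.1 IH (abs_nonneg _) (by linarith)
      _ = g a * (∏ i ∈ s, g i) * (e a + ∑ i ∈ s, e i) := by ring

theorem ascPochhammer_eval_eq_prod_range {S : Type*} [CommSemiring S] (m : ℕ) (a : S) :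
    (ascPochhammer S m).eval a = ∏ k ∈ range m, (a + k) := by
  induction m with
  | zero => simp
  | succ m ih => rw [ascPochhammer_succ_eval, prod_range_succ, ih]

theorem prod_range_ite_lt_le_pow (x : ℝ) (hx : 1 ≤ x) (m b : ℕ) :
    ∏ k ∈ range m, (if k < b then x else 1) ≤ x ^ b := by
  rw [← prod_filter, prod_const]
  refine pow_le_pow_right₀ hx ((card_le_card fun k hk => ?_).trans (card_range b).le)
  simpa using (mem_filter.1 hk).2

section Pochhammer

variable {μ a : ℝ} {b : ℕ}

theorem pow_div_ascPochhammer_eq_prod (m : ℕ) :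
    μ ^ m / (ascPochhammer ℝ m).eval a = ∏ k ∈ range m, μ / (a + k) := by
  rw [ascPochhammer_eval_eq_prod_range, prod_div_distrib, prod_const, card_range]

theorem div_add_le_ite (hμ : 0 < μ) (h2a : μ < 2 * a) (hb : μ ≤ a + b) (k : ℕ) :
    μ / (a + k) ≤ if k < b then 2 else 1 := by
  have hak : 0 < a + k := by positivity [(by linarith : 0 < a)]
  split_ifs with hkb
  · rw [div_le_iff₀ hak]; linarith [(Nat.cast_nonneg k : (0 : ℝ) ≤ k)]
  · rw [div_le_one hak]; linarith [(Nat.cast_le.2 (not_lt.1 hkb) : (b : ℝ) ≤ k)]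

theorem pow_div_ascPochhammer_le (hμ : 0 < μ) (h2a : μ < 2 * a) (hb : μ ≤ a + b) (m : ℕ) :
    μ ^ m / (ascPochhammer ℝ m).eval a ≤ 2 ^ b := by
  rw [pow_div_ascPochhammer_eq_prod]
  refine (prod_le_prod (fun k _ => ?_) fun k _ => div_add_le_ite hμ h2a hb k).trans
    (prod_range_ite_lt_le_pow 2 one_le_two m b)
  have : 0 < a := by linarith
  positivity

theorem abs_one_sub_pow_div_ascPochhammer_le (hμ : 0 < μ) (h2a : μ < 2 * a) (hb : μ ≤ a + b)
    (m : ℕ) :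
    |1 - μ ^ m / (ascPochhammer ℝ m).eval a| ≤
      2 ^ b * ∑ k ∈ range m, 2 * |μ - (a + k)| / μ := by
  have ha : 0 < a := by linarith
  rw [pow_div_ascPochhammer_eq_prod]
  have hg : ∀ k ∈ range m, (1 : ℝ) ≤ if k < b then 2 else 1 := fun k _ => by
    split_ifs <;> norm_num
  have hdev : ∀ k ∈ range m, |1 - μ / (a + k)| ≤
      (if k < b then 2 else 1) * (2 * |μ - (a + k)| / μ) := fun k hk => by
    have hak : μ < 2 * (a + k) := by linarith [(Nat.cast_nonneg k : (0 : ℝ) ≤ k)]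
    have hak0 : 0 < a + k := by linarith
    have : |1 - μ / (a + k)| ≤ 2 * |μ - (a + k)| / μ := by
      rw [one_sub_div hak0.ne', abs_div, abs_of_pos hak0, abs_sub_comm (a + k),
        div_le_div_iff₀ hak0 hμ]
      nlinarith [abs_nonneg (μ - (a + k))]
    exact this.trans (le_mul_of_one_le_left (by positivity) (hg k hk))
  refine (abs_one_sub_prod_le _ (fun k _ => by positivity) (fun k _ => div_add_le_ite hμ h2a hb k)
    hg hdev).trans ?_
  exact mul_le_mul_of_nonneg_right (prod_range_ite_lt_le_pow 2 one_le_two m b)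
    (sum_nonneg fun k _ => by positivity)

end Pochhammer

theorem abs_one_sub_pow_div_prod_ascPochhammer_le {ι : Type*} (s : Finset ι) (m b : ι → ℕ)
    (a : ι → ℝ) {μ : ℝ} (hμ : 0 < μ) (h2a : ∀ i ∈ s, μ < 2 * a i)
    (hb : ∀ i ∈ s, μ ≤ a i + b i) :
    |1 - μ ^ (∑ i ∈ s, m i) / ∏ i ∈ s, (ascPochhammer ℝ (m i)).eval (a i)| ≤
      2 ^ (∑ i ∈ s, b i) * ∑ i ∈ s, ∑ k ∈ range (m i), 2 * |μ - (a i + k)| / μ := by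
  rw [← prod_pow_eq_pow_sum, ← prod_div_distrib, ← prod_pow_eq_pow_sum]
  refine abs_one_sub_prod_le s (fun i hi => ?_) (fun i hi => pow_div_ascPochhammer_le hμ (h2a i hi)
    (hb i hi) _) (fun i _ => one_le_pow₀ one_le_two) (fun i hi =>
      abs_one_sub_pow_div_ascPochhammer_le hμ (h2a i hi) (hb i hi) _)
  have : 0 < a i := by linarith [h2a i hi]
  exact div_nonneg (pow_nonneg hμ.le _) (ascPochhammer_pos _ _ this).le

theorem sum_range_abs_sub_le {c : ℝ} (hc : 0 ≤ c) (m : ℕ) :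
    ∑ k ∈ range m, 2 * |c - k| ≤ 2 * m * c + m ^ 2 := by
  have gauss : (∑ k ∈ range m, k) * 2 ≤ m ^ 2 := by
    rw [sum_range_id_mul_two, sq]; exact Nat.mul_le_mul_left _ (Nat.sub_le _ _)
  have gaussR : (∑ k ∈ range m, (k : ℝ)) * 2 ≤ (m : ℝ) ^ 2 := by
    simpa using (Nat.cast_le (α := ℝ)).2 gauss
  calc ∑ k ∈ range m, 2 * |c - k| ≤ ∑ k ∈ range m, 2 * (c + k) := by
        gcongr with k
        exact (abs_sub _ _).trans (by rw [abs_of_nonneg hc, Nat.abs_cast])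
    _ = 2 * m * c + (∑ k ∈ range m, (k : ℝ)) * 2 := by
        rw [← mul_sum, sum_add_distrib, sum_const, card_range, nsmul_eq_mul]; ring
    _ ≤ 2 * m * c + m ^ 2 := by linarith

theorem sum_sum_range_abs_half_mul_sub_le (d q : ℕ) (hd : 1 ≤ d) (lam : Fin q → ℕ) :
    ∑ j : Fin q, ∑ k ∈ range (lam j), 2 * |(d : ℝ) / 2 * (j : ℕ) - k| ≤
      d * q * ((∑ j, lam j : ℕ) : ℝ) ^ 2 := by
  rcases q.eq_zero_or_pos with rfl | hq
  · simp
  set n := ∑ j, lam j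
  have hj : ∀ j : Fin q, 2 * ((d : ℝ) / 2 * (j : ℕ)) ≤ d * (q - 1) := fun j => by
    have : ((j : ℕ) : ℝ) + 1 ≤ q := by exact_mod_cast j.isLt
    nlinarith
  have hsq : ∑ j, (lam j : ℝ) ^ 2 ≤ (n : ℝ) ^ 2 := by
    push_cast [n]; exact sum_sq_le_sq_sum_of_nonneg fun j _ => Nat.cast_nonneg _
  have hn : (n : ℝ) ≤ n ^ 2 := by exact_mod_cast Nat.le_self_pow two_ne_zero n
  have hdq : (0 : ℝ) ≤ d * (q - 1) := by
    have : (1 : ℝ) ≤ q := by exact_mod_cast hq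
    positivity
  calc ∑ j : Fin q, ∑ k ∈ range (lam j), 2 * |(d : ℝ) / 2 * (j : ℕ) - k|
      ≤ ∑ j : Fin q, (2 * (lam j : ℝ) * ((d : ℝ) / 2 * (j : ℕ)) + (lam j : ℝ) ^ 2) :=
        sum_le_sum fun j _ => sum_range_abs_sub_le (by positivity) _
    _ ≤ ∑ j : Fin q, ((lam j : ℝ) * (d * (q - 1)) + (lam j : ℝ) ^ 2) := by
        refine sum_le_sum fun j _ => ?_
        linarith [mul_le_mul_of_nonneg_left (hj j) (Nat.cast_nonneg (α := ℝ) (lam j))]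
    _ = n * (d * (q - 1)) + ∑ j, (lam j : ℝ) ^ 2 := by
        rw [sum_add_distrib, ← sum_mul]; push_cast [n]; rfl
    _ ≤ d * q * (n : ℝ) ^ 2 := by
        have : (1 : ℝ) ≤ d := by exact_mod_cast hd
        nlinarith [mul_le_mul_of_nonneg_right hn hdq]

theorem Fin.sum_univ_mul_val (d q : ℕ) : ∑ j : Fin q, d * (j : ℕ) = d * q * (q - 1) / 2 := by
  rw [← mul_sum, Fin.sum_univ_eq_sum_range (fun i => i) q, sum_range_id, mul_assoc,
    Nat.mul_div_assoc _ (Nat.even_mul_pred_self q).two_dvd]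

/-- The generalized Pochhammer symbol `(μ)_λ = ∏_{j=1}^q (μ - (d/2)(j-1))_{λ_j}`,
where `(a)_n` is the rising factorial. -/
noncomputable def genPochhammer (d q : ℕ) (μ : ℝ) (lam : Fin q → ℕ) : ℝ :=
  ∏ j : Fin q, (ascPochhammer ℝ (lam j)).eval (μ - (d : ℝ) / 2 * (j : ℕ))

theorem stmt_7_general (d q : ℕ) (hd : d ∈ ({1, 2, 4} : Set ℕ)) (lam : Fin q → ℕ)
    (μ : ℝ) (hμ : (d : ℝ) * ((q : ℝ) - 1 / 2) < μ) :
    |1 - μ ^ (∑ j, lam j) / genPochhammer d q μ lam| ≤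
      (d : ℝ) * q * 2 ^ (d * q * (q - 1) / 2) * ((∑ j, lam j : ℕ) : ℝ) ^ 2 / μ := by
  have hd1 : 1 ≤ d := by obtain rfl | rfl | rfl := hd <;> norm_num
  rcases q.eq_zero_or_pos with rfl | hq
  · simp [genPochhammer]
  have hj : ∀ j : Fin q, (d : ℝ) * (j : ℕ) ≤ d * (q - 1) := fun j => by
    have : ((j : ℕ) : ℝ) + 1 ≤ q := by exact_mod_cast j.isLt
    gcongr; linarith
  have hμ0 : 0 < μ := by
    have : (1 : ℝ) ≤ d := by exact_mod_cast hd1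
    have : (1 : ℝ) ≤ q := by exact_mod_cast hq
    nlinarith
  have key := abs_one_sub_pow_div_prod_ascPochhammer_le univ lam (fun j : Fin q => d * (j : ℕ))
    (fun j => μ - (d : ℝ) / 2 * (j : ℕ)) hμ0 (fun j _ => by linarith [hj j])
    (fun j _ => by push_cast; linarith [(by positivity : (0 : ℝ) ≤ d * (j : ℕ))])
  rw [Fin.sum_univ_mul_val] at key
  calc |1 - μ ^ (∑ j, lam j) / genPochhammer d q μ lam|
      ≤ 2 ^ (d * q * (q - 1) / 2) *
          ((∑ j : Fin q, ∑ k ∈ range (lam j), 2 * |(d : ℝ) / 2 * (j : ℕ) - k|) / μ) := by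
        refine key.trans_eq ?_
        congr 1
        rw [sum_div]; refine sum_congr rfl fun j _ => ?_
        rw [sum_div]; refine sum_congr rfl fun k _ => ?_
        ring_nf
    _ ≤ 2 ^ (d * q * (q - 1) / 2) * (d * q * ((∑ j, lam j : ℕ) : ℝ) ^ 2 / μ) := by
        gcongr; exact sum_sum_range_abs_half_mul_sub_le d q hd1 lam
    _ = _ := by ring

theorem stmt_7 (d q : ℕ) (hd : d ∈ ({1, 2, 4} : Set ℕ)) (lam : Fin q → ℕ)
    (hlam : Antitone lam) (μ : ℝ) (hμ : (d : ℝ) * ((q : ℝ) - 1 / 2) < μ) :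
    |1 - μ ^ (∑ j, lam j) / genPochhammer d q μ lam| ≤
      (d : ℝ) * q * 2 ^ (d * q * (q - 1) / 2) * ((∑ j, lam j : ℕ) : ℝ) ^ 2 / μ :=
  stmt_7_general d q hd lam μ hμ
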